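/- arXiv:2003.08722 — 3 statements merged into one kernel-verified Lean document; each statement's English description precedes it below -/
import Mathlib

section
/- If the list Λ = (λ_1, …, λ_n) of complex numbers is realizable, with λ_1 real and λ_1 ≥ |λ_i| for all i (λ_1 is the Perron eigenvalue), then for every ε ≥ 0 the list Λ_ε = (λ_1 + ε, λ_2, …, λ_n) is also realizable. -/
/-!
Let `A ≥ 0` realize `Λ`, with Perron root `r = λ₁`. A weak Perron–Frobenius argument gives a
nonnegative eigenvector `v` for `r`: for `s > r` the Neumann series shows `(sI - A)⁻¹ ≥ 0`, hence
`adj (sI - A) ≥ 0`. Dividing `adj (XI - A)` by the largest power `(X - r)ᵏ` dividing all its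
entries and evaluating at `r` gives a nonzero matrix, nonnegative as the limit of
`adj (sI - A) / (s - r)ᵏ` as `s → r⁺`, whose columns lie in `ker (rI - A)`.
Brauer's theorem then says that `A + v qᵀ`, with `q ≥ 0` and `q ⬝ v = ε`, has the spectrum of `A`
with `r` replaced by `r + ε`, and it is still nonnegative.
-/

open Polynomial Matrix Finset

/-- A list of complex numbers is realizable if it is the spectrum (counted with
algebraic multiplicity) of an entrywise nonnegative real matrix. -/
def Realizable {n : ℕ} (l : Fin n → ℂ) : Prop :=
  ∃ A : Matrix (Fin n) (Fin n) ℝ, (∀ i j, 0 ≤ A i j) ∧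
    (A.map (Complex.ofReal)).charpoly = ∏ i, (X - C (l i))

open scoped ENNReal

theorem spectrum.hasSum_pow_smul_pow {A : Type*} [NormedRing A] [NormedAlgebra ℂ A]
    [CompleteSpace A] (a : A) {z : ℂ} (hz : (‖z‖₊ : ℝ≥0∞) < (spectralRadius ℂ a)⁻¹) :
    HasSum (fun n => z ^ n • a ^ n) (Ring.inverse (1 - z • a)) := by
  obtain ⟨t, hzt, htρ⟩ := ENNReal.lt_iff_exists_nnreal_btwn.1 hz
  have H := (hasFPowerSeriesOnBall_inverse_one_sub_smul ℂ a).exchange_radius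
    ((differentiableOn_inverse_one_sub_smul htρ).hasFPowerSeriesOnBall
      (pos_of_gt (ENNReal.coe_lt_coe.1 hzt)))
  simpa using H.hasSum (y := z) (by simpa [Metric.mem_eball, edist_zero_right] using mod_cast hzt)

namespace Polynomial

theorem Monic.eval_pos_of_forall_isRoot_le {p : ℝ[X]} (hp : p.Monic) {r s : ℝ}
    (hroots : ∀ x, p.IsRoot x → x ≤ r) (hrs : r < s) : 0 < p.eval s := by
  by_contra! hs
  rcases eq_or_ne p 1 with rfl | hp1
  · norm_num at hs
  have htop := tendsto_atTop_of_leadingCoeff_nonneg p (hp.degree_pos.2 hp1)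
    (by simp [hp.leadingCoeff])
  obtain ⟨c, hsc, hc⟩ := intermediate_value_Ici p.continuous.continuousOn htop (Set.mem_Ici.2 hs)
  exact absurd (hroots c hc) (not_le.2 (hrs.trans_le hsc))

theorem eval_nonneg_of_forall_pow_mul_eval_nonneg {p : ℝ[X]} {r : ℝ} {k : ℕ}
    (h : ∀ s, r < s → 0 ≤ (s - r) ^ k * p.eval s) : 0 ≤ p.eval r :=
  ge_of_tendsto (p.continuous.tendsto r |>.mono_left nhdsWithin_le_nhds)
    (eventually_nhdsWithin_of_forall (s := Set.Ioi r) fun s hs =>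
      nonneg_of_mul_nonneg_right (h s hs) (pow_pos (sub_pos.2 hs) k))

theorem mul_prod_X_sub_C_update {R ι : Type*} [CommRing R] [Fintype ι] [DecidableEq ι]
    (l : ι → R) (i₀ : ι) (b : R) :
    (X - C (l i₀)) * ∏ i, (X - C (Function.update l i₀ b i)) = (X - C b) * ∏ i, (X - C (l i)) := by
  rw [← mul_prod_erase univ _ (mem_univ i₀), ← mul_prod_erase univ (fun i => X - C (l i))
    (mem_univ i₀), Function.update_self, prod_congr rfl fun i hi => by
      rw [Function.update_of_ne (ne_of_mem_erase hi)]]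
  ring

end Polynomial

namespace Matrix

theorem exists_eq_X_sub_C_pow_smul {R m n : Type*} [CommRing R] {B : Matrix m n R[X]}
    (hB : B ≠ 0) (a : R) :
    ∃ (k : ℕ) (N : Matrix m n R[X]), B = (X - C a) ^ k • N ∧ ∃ i j, (N i j).eval a ≠ 0 := by
  classical
  have hex : ∃ k, ¬ ∀ i j, (X - C a) ^ (k + 1) ∣ B i j := by
    obtain ⟨i, j, hij⟩ : ∃ i j, B i j ≠ 0 := by
      by_contra! h
      exact hB (Matrix.ext h)
    exact ⟨_, fun h => pow_rootMultiplicity_not_dvd hij a (h i j)⟩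
  have hdvd : ∀ i j, (X - C a) ^ Nat.find hex ∣ B i j := by
    rcases h : Nat.find hex with _ | k
    · simp
    · exact not_not.1 (Nat.find_min hex (h ▸ k.lt_succ_self))
  choose N hN using hdvd
  refine ⟨Nat.find hex, Matrix.of N, Matrix.ext fun i j => hN i j, ?_⟩
  by_contra! h
  refine Nat.find_spec hex fun i j => ?_
  rw [hN, pow_succ]
  exact mul_dvd_mul_left _ (dvd_iff_isRoot.2 (h i j))

variable {n : Type*} [Fintype n] [DecidableEq n]

theorem charmatrix_map_eval {R : Type*} [CommRing R] (M : Matrix n n R) (t : R) :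
    (charmatrix M).map (eval t) = scalar n t - M := by
  ext i j
  by_cases h : i = j <;> simp [h]

theorem mul_eval_eq_smul_of_charmatrix_mul_eq {R : Type*} [CommRing R] [IsDomain R] [Nonempty n]
    {A : Matrix n n R} {r : R} (hr : A.charpoly.IsRoot r) {k : ℕ} {N : Matrix n n R[X]}
    (h : charmatrix A * ((X - C r) ^ k • N) = A.charpoly • 1) :
    A * N.map (eval r) = r • N.map (eval r) := by
  obtain ⟨i₀⟩ := ‹Nonempty n›
  rw [Matrix.mul_smul] at h
  set D := charmatrix A * N
  set q := D i₀ i₀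
  have hχ : (X - C r) ^ k * q = A.charpoly := by simpa using congrFun (congrFun h i₀) i₀
  have hD : D = q • 1 := Matrix.ext fun i j => by
    refine mul_left_cancel₀ (pow_ne_zero k (X_sub_C_ne_zero r)) ?_
    have := congrFun (congrFun h i) j
    simp only [smul_apply, smul_eq_mul] at this ⊢
    rw [this, ← hχ, mul_assoc]
  have hev : (scalar n r - A) * N.map (eval r) = q.eval r • 1 := by
    have := congrArg (evalRingHom r).mapMatrix hD
    rw [map_mul, RingHom.mapMatrix_apply, RingHom.mapMatrix_apply, coe_evalRingHom,
      charmatrix_map_eval] at this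
    rw [this, RingHom.mapMatrix_apply, smul_one_eq_diagonal, smul_one_eq_diagonal,
      diagonal_map (map_zero _)]
    rfl
  -- `det (rI - A) = χ_A(r) = 0` forces the scalar `q(r)` to vanish.
  have hq : q.eval r = 0 := by
    have := congrArg det hev
    rw [det_mul, ← eval_charpoly, hr.eq_zero, zero_mul, det_smul, det_one, mul_one] at this
    exact (pow_eq_zero_iff Fintype.card_ne_zero).1 this.symm
  rw [hq, zero_smul, Matrix.sub_mul, sub_eq_zero, scalar_apply, ← smul_eq_diagonal_mul] at hev
  exact hev.symm

theorem det_one_sub_vecMulVec {R : Type*} [CommRing R] (u v : n → R) :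
    (1 - vecMulVec u v).det = 1 - u ⬝ᵥ v := by
  have h := eval_charpoly (vecMulVec u v) 1
  rw [charpoly_vecMulVec] at h
  cases isEmpty_or_nonempty n
  · simp
  · simpa using h.symm

theorem mul_det_sub_vecMulVec_of_mulVec_eq_smul {R : Type*} [CommRing R] [IsDomain R]
    {M : Matrix n n R} {v q : n → R} {c : R} (hc : c ≠ 0) (hv : M *ᵥ v = c • v) :
    c * (M - vecMulVec v q).det = (c - q ⬝ᵥ v) * M.det := by
  let f := algebraMap R (FractionRing R)
  have hf : Function.Injective f := IsFractionRing.injective R (FractionRing R)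
  have hfc : f c ≠ 0 := (map_ne_zero_iff f hf).2 hc
  have hv' : M.map f *ᵥ (f ∘ v) = f c • (f ∘ v) := by
    ext i
    simp [← RingHom.map_mulVec, hv]
  have hfac : (M - vecMulVec v q).map f =
      M.map f * (1 - vecMulVec ((f c)⁻¹ • (f ∘ v)) (f ∘ q)) := by
    rw [Matrix.mul_sub, mul_one, mul_vecMulVec, mulVec_smul, hv', inv_smul_smul₀ hfc]
    ext i j
    simp [vecMulVec_apply]
  apply hf
  rw [map_mul, map_mul, RingHom.map_det, RingHom.map_det, RingHom.mapMatrix_apply,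
    RingHom.mapMatrix_apply, hfac, det_mul, det_one_sub_vecMulVec, map_sub,
    RingHom.map_dotProduct, smul_dotProduct, dotProduct_comm, smul_eq_mul]
  field_simp

theorem charmatrix_mulVec_of_mulVec_eq_smul {R : Type*} [CommRing R] {A : Matrix n n R}
    {v : n → R} {r : R} (hv : A *ᵥ v = r • v) :
    charmatrix A *ᵥ (C ∘ v) = (X - C r) • (C ∘ v) := by
  funext i
  simp [charmatrix, sub_mulVec, sub_mul, ← RingHom.map_mulVec, hv]

theorem charpoly_add_vecMulVec_of_mulVec_eq_smul {R : Type*} [CommRing R] [IsDomain R]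
    {A : Matrix n n R} {v : n → R} {r : R} (hv : A *ᵥ v = r • v) (q : n → R) :
    (X - C r) * (A + vecMulVec v q).charpoly = (X - C (r + q ⬝ᵥ v)) * A.charpoly := by
  have hchar : charmatrix (A + vecMulVec v q) = charmatrix A - vecMulVec (C ∘ v) (C ∘ q) := by
    refine Matrix.ext fun i j => ?_
    simp [charmatrix_apply, vecMulVec_apply, sub_sub]
  rw [charpoly, hchar, mul_det_sub_vecMulVec_of_mulVec_eq_smul (X_sub_C_ne_zero r)
    (charmatrix_mulVec_of_mulVec_eq_smul hv), charpoly, ← RingHom.map_dotProduct, C_add, sub_sub]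

theorem isRoot_charpoly_map_ofReal_iff {A : Matrix n n ℝ} {x : ℝ} :
    (A.map Complex.ofReal).charpoly.IsRoot x ↔ A.charpoly.IsRoot x := by
  rw [show A.map Complex.ofReal = A.map Complex.ofRealHom from rfl, charpoly_map, IsRoot.def,
    IsRoot.def, ← Complex.ofRealHom_eq_coe, eval_map_apply, map_eq_zero]

section Resolvent

-- Any Banach-algebra norm would do: it only serves to expand the resolvent up to the spectral radius.
attribute [local instance] Matrix.linftyOpNormedRing Matrix.linftyOpNormedAlgebra

variable {A : Matrix n n ℝ} {r s : ℝ}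

theorem summable_pow_inv_smul
    (hroots : ∀ z : ℂ, (A.map Complex.ofReal).charpoly.IsRoot z → ‖z‖ ≤ r) (hrs : r < s)
    (hs : 0 < s) : Summable fun k => (s⁻¹ • A) ^ k := by
  have : CompleteSpace (Matrix n n ℂ) := FiniteDimensional.complete ℂ _
  have hρ : spectralRadius ℂ (A.map Complex.ofReal) < ENNReal.ofReal s := by
    refine lt_of_le_of_lt (iSup₂_le fun z hz => ?_) ((ENNReal.ofReal_lt_ofReal_iff hs).2 hrs)
    rw [← ENNReal.ofReal_coe_nnreal, coe_nnnorm]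
    exact ENNReal.ofReal_le_ofReal (hroots z (mem_spectrum_iff_isRoot_charpoly.1 hz))
  have hz : (‖(s⁻¹ : ℂ)‖₊ : ℝ≥0∞) < (spectralRadius ℂ (A.map Complex.ofReal))⁻¹ := by
    rwa [ENNReal.lt_inv_iff_lt_inv, ← ENNReal.ofReal_coe_nnreal, coe_nnnorm, norm_inv,
      Complex.norm_real, Real.norm_of_nonneg hs.le, ENNReal.ofReal_inv_of_pos hs, inv_inv]
  have hsum := (spectrum.hasSum_pow_smul_pow _ hz).summable
  refine Pi.summable.2 fun i => Pi.summable.2 fun j => Complex.summable_ofReal.1 ?_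
  convert Pi.summable.1 (Pi.summable.1 hsum i) j using 2 with k
  rw [show A.map Complex.ofReal = A.map Complex.ofRealHom from rfl, ← Matrix.map_pow]
  simp [_root_.smul_pow]

theorem exists_nonneg_mul_scalar_sub_eq_one (hA : ∀ i j, 0 ≤ A i j)
    (hroots : ∀ z : ℂ, (A.map Complex.ofReal).charpoly.IsRoot z → ‖z‖ ≤ r) (hrs : r < s)
    (hs : 0 < s) : ∃ T : Matrix n n ℝ, (∀ i j, 0 ≤ T i j) ∧ (scalar n s - A) * T = 1 := by
  have hsum := summable_pow_inv_smul hroots hrs hs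
  refine ⟨s⁻¹ • ∑' k, (s⁻¹ • A) ^ k, fun i j => ?_, ?_⟩
  · have hentry : (∑' k, (s⁻¹ • A) ^ k) i j = ∑' k, ((s⁻¹ • A) ^ k) i j := by
      rw [← tsum_apply (Pi.summable.1 hsum i)]
      exact congrFun (tsum_apply hsum) j
    rw [smul_apply, hentry, smul_eq_mul]
    exact mul_nonneg (inv_nonneg.2 hs.le) (tsum_nonneg fun k =>
      pow_apply_nonneg (fun i j => mul_nonneg (inv_nonneg.2 hs.le) (hA i j)) k i j)
  · have hfac : scalar n s - A = s • (1 - s⁻¹ • A) := by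
      rw [smul_sub, smul_smul, mul_inv_cancel₀ hs.ne', one_smul, scalar_apply,
        smul_one_eq_diagonal]
    rw [hfac, smul_mul_smul_comm, mul_inv_cancel₀ hs.ne', one_smul, hsum.one_sub_mul_tsum_pow]

theorem adjugate_scalar_sub_apply_nonneg (hA : ∀ i j, 0 ≤ A i j)
    (hroots : ∀ z : ℂ, (A.map Complex.ofReal).charpoly.IsRoot z → ‖z‖ ≤ r) (hrs : r < s)
    (hs : 0 < s) (i j : n) : 0 ≤ adjugate (scalar n s - A) i j := by
  obtain ⟨T, hT, hMT⟩ := exists_nonneg_mul_scalar_sub_eq_one hA hroots hrs hs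
  have hdet : 0 < (scalar n s - A).det := by
    rw [← eval_charpoly]
    refine A.charpoly_monic.eval_pos_of_forall_isRoot_le (fun x hx => ?_) hrs
    exact (le_abs_self x).trans (by simpa using hroots x (isRoot_charpoly_map_ofReal_iff.2 hx))
  have hadj : adjugate (scalar n s - A) = (scalar n s - A).det • T := by
    rw [← Matrix.mul_one (adjugate _), ← hMT, ← Matrix.mul_assoc, adjugate_mul, smul_mul,
      Matrix.one_mul]
  rw [hadj, smul_apply, smul_eq_mul]
  exact mul_nonneg hdet.le (hT i j)

end Resolvent

theorem exists_nonneg_eigenvector_of_isRoot_charpoly {A : Matrix n n ℝ} (hA : ∀ i j, 0 ≤ A i j)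
    {r : ℝ} (hroots : ∀ z : ℂ, (A.map Complex.ofReal).charpoly.IsRoot z → ‖z‖ ≤ r)
    (hr : A.charpoly.IsRoot r) : ∃ v : n → ℝ, (∀ i, 0 ≤ v i) ∧ v ≠ 0 ∧ A *ᵥ v = r • v := by
  have hr0 : 0 ≤ r := (norm_nonneg _).trans (hroots r (isRoot_charpoly_map_ofReal_iff.2 hr))
  have : Nonempty n := (isEmpty_or_nonempty n).resolve_left fun _ => by simp at hr
  have hB : adjugate (charmatrix A) ≠ 0 := fun h0 => by
    have := mul_adjugate (charmatrix A)
    rw [h0, Matrix.mul_zero, eq_comm, smul_eq_zero] at this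
    exact this.elim A.charpoly_monic.ne_zero one_ne_zero
  obtain ⟨k, N, hBN, i, j, hij⟩ := exists_eq_X_sub_C_pow_smul hB r
  have hAN := mul_eval_eq_smul_of_charmatrix_mul_eq hr (hBN ▸ mul_adjugate (charmatrix A))
  have hN : ∀ a b, 0 ≤ (N a b).eval r := fun a b =>
    eval_nonneg_of_forall_pow_mul_eval_nonneg fun s hs => by
      have := adjugate_scalar_sub_apply_nonneg hA hroots hs (hr0.trans_lt hs) a b
      rw [← charmatrix_map_eval, ← coe_evalRingHom, ← RingHom.mapMatrix_apply,
        ← RingHom.map_adjugate, hBN] at this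
      simpa using this
  refine ⟨fun a => (N a j).eval r, fun a => hN a j, fun h => hij (congrFun h i), ?_⟩
  funext a
  exact congrFun (congrFun hAN a) j

theorem exists_nonneg_X_sub_C_mul_charpoly_eq {A : Matrix n n ℝ} (hA : ∀ i j, 0 ≤ A i j) {r : ℝ}
    (hroots : ∀ z : ℂ, (A.map Complex.ofReal).charpoly.IsRoot z → ‖z‖ ≤ r)
    (hr : A.charpoly.IsRoot r) {ε : ℝ} (hε : 0 ≤ ε) :
    ∃ B : Matrix n n ℝ, (∀ i j, 0 ≤ B i j) ∧
      (X - C r) * B.charpoly = (X - C (r + ε)) * A.charpoly := by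
  obtain ⟨v, hv0, hv, hAv⟩ := exists_nonneg_eigenvector_of_isRoot_charpoly hA hroots hr
  obtain ⟨i, hi⟩ := Function.ne_iff.1 hv
  have hvi : 0 < v i := (hv0 i).lt_of_ne' hi
  let q : n → ℝ := Pi.single i (ε / v i)
  have hq0 : ∀ j, 0 ≤ q j := fun j => by
    by_cases h : j = i <;> simp [q, h, div_nonneg hε hvi.le]
  have hqv : q ⬝ᵥ v = ε := by simp [q, single_dotProduct, hvi.ne']
  refine ⟨A + vecMulVec v q, fun j k => add_nonneg (hA j k) (mul_nonneg (hv0 j) (hq0 k)), ?_⟩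
  rw [charpoly_add_vecMulVec_of_mulVec_eq_smul hAv, hqv]

end Matrix

/-- If `Λ = (λ_1, …, λ_n)` is realizable with Perron eigenvalue `λ_1`, then for every
`ε ≥ 0` the list `(λ_1 + ε, λ_2, …, λ_n)` is also realizable. -/
theorem realizable_add_eps (n : ℕ) (hn : 0 < n) (l : Fin n → ℂ)
    (h1 : (l ⟨0, hn⟩).im = 0)
    (hperron : ∀ i, ‖l i‖ ≤ (l ⟨0, hn⟩).re)
    (hreal : Realizable l) (ε : ℝ) (hε : 0 ≤ ε) :
    Realizable (Function.update l ⟨0, hn⟩ (l ⟨0, hn⟩ + (ε : ℂ))) := by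
  obtain ⟨A, hA, hchar⟩ := hreal
  set i₀ : Fin n := ⟨0, hn⟩
  set r := (l i₀).re
  have hl₀ : l i₀ = r := Complex.ext rfl h1
  have hroots : ∀ z : ℂ, (A.map Complex.ofReal).charpoly.IsRoot z → ‖z‖ ≤ r := by
    intro z hz
    rw [hchar, isRoot_prod] at hz
    obtain ⟨i, -, hi⟩ := hz
    rw [IsRoot.def, eval_sub, eval_X, eval_C, sub_eq_zero] at hi
    exact hi ▸ hperron i
  have hr : A.charpoly.IsRoot r := by
    rw [← isRoot_charpoly_map_ofReal_iff, hchar, isRoot_prod]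
    exact ⟨i₀, mem_univ _, by simp [hl₀]⟩
  obtain ⟨B, hB, hBchar⟩ := exists_nonneg_X_sub_C_mul_charpoly_eq hA hroots hr hε
  refine ⟨B, hB, mul_left_cancel₀ (X_sub_C_ne_zero (l i₀)) ?_⟩
  have hBcharℂ := congrArg (Polynomial.map Complex.ofRealHom) hBchar
  simp only [Polynomial.map_mul, Polynomial.map_sub, map_X, map_C, ← charpoly_map] at hBcharℂ
  rw [mul_prod_X_sub_C_update, ← hchar, hl₀]
  exact_mod_cast hBcharℂ
end

section
/- (Symmetric Rado theorem) Let A be an n×n real symmetric matrix whose characteristic polynomial equals ∏_{i=1}^n (X − λ_i). Let x_1, …, x_r be an orthonormal set of eigenvectors of A with A·X = X·Ω, where X = [x_1 | … | x_r] is the n×r matrix with these columns (so XᵀX = I_r) and Ω = diag(λ_1, …, λ_r). Let C be any r×r real symmetric matrix. Then A + X·C·Xᵀ is symmetric and its characteristic polynomial equals the characteristic polynomial of Ω + C multiplied by ∏_{i=r+1}^n (X − λ_i); that is, A + X·C·Xᵀ has eigenvalues μ_1, …, μ_r, λ_{r+1}, …, λ_n, where μ_1, …, μ_r are the eigenvalues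 of Ω + C. -/
/-!
Let `M = X·1 - A` and `N = X·1 - Ω` be the characteristic matrices, viewed over the fraction
field of `ℝ[X]`. From `A·Xm = Xm·Ω` and `Xmᵀ·Xm = 1` we get `M·Xm = Xm·N`, hence
`Xmᵀ·M⁻¹·Xm = N⁻¹`, and the matrix determinant lemma gives
`det (M - Xm·Cm·Xmᵀ) · det N = det M · det (N - Cm)`, that is
`χ(A + Xm·Cm·Xmᵀ) · χ(Ω) = χ(A) · χ(Ω + Cm)`. Cancelling `χ(Ω) = ∏_{i<r} (X - λ_i)` against
`χ(A) = ∏_i (X - λ_i)` leaves the claim.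
-/

open Polynomial Matrix Finset

namespace Matrix

theorem IsSymm.mul_mul_transpose {m n α : Type*} [Fintype n] [CommSemiring α]
    {B : Matrix n n α} (hB : B.IsSymm) (U : Matrix m n α) : (U * B * Uᵀ).IsSymm := by
  rw [IsSymm, transpose_mul, transpose_mul, transpose_transpose, hB.eq, Matrix.mul_assoc]

variable {m n : Type*} [Fintype m] [DecidableEq m] [Fintype n] [DecidableEq n]

theorem det_sub_mul_mul_mul_det {α : Type*} [CommRing α] {M : Matrix m m α} {N : Matrix n n α}
    {U : Matrix m n α} {V : Matrix n m α} (B : Matrix n n α) (hVU : V * U = 1)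
    (hMU : M * U = U * N) (hM : IsUnit M.det) (hN : IsUnit N.det) :
    (M - U * B * V).det * N.det = M.det * (N - B).det := by
  have hVMU : V * M⁻¹ * U = N⁻¹ := by
    have hMU' : M⁻¹ * U = U * N⁻¹ :=
      calc M⁻¹ * U = M⁻¹ * (U * N) * N⁻¹ := by
            rw [← Matrix.mul_assoc, mul_nonsing_inv_cancel_right _ _ hN]
        _ = U * N⁻¹ := by rw [← hMU, nonsing_inv_mul_cancel_left _ _ hM]
    rw [Matrix.mul_assoc, hMU', ← Matrix.mul_assoc, hVU, Matrix.one_mul]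
  have hNB : N - B = (1 - B * N⁻¹) * N := by
    rw [Matrix.sub_mul, Matrix.one_mul, nonsing_inv_mul_cancel_right _ _ hN]
  calc (M - U * B * V).det * N.det
      = M.det * (1 - B * (V * M⁻¹ * U)).det * N.det := by
        rw [sub_eq_add_neg, Matrix.mul_assoc, ← Matrix.mul_neg, det_add_mul _ _ hM]
        simp only [Matrix.neg_mul, Matrix.mul_assoc, ← sub_eq_add_neg]
    _ = M.det * (N - B).det := by rw [hVMU, hNB, det_mul, mul_assoc]

theorem det_sub_mul_mul_mul_det_of_ne_zero {S : Type*} [CommRing S] [IsDomain S]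
    {M : Matrix m m S} {N : Matrix n n S} {U : Matrix m n S} {V : Matrix n m S}
    (B : Matrix n n S) (hVU : V * U = 1) (hMU : M * U = U * N) (hM : M.det ≠ 0)
    (hN : N.det ≠ 0) :
    (M - U * B * V).det * N.det = M.det * (N - B).det := by
  let φ := algebraMap S (FractionRing S)
  have hφ : Function.Injective φ := IsFractionRing.injective S (FractionRing S)
  have hunit : ∀ d : S, d ≠ 0 → IsUnit (φ d) := fun d hd =>
    isUnit_iff_ne_zero.mpr ((map_ne_zero_iff φ hφ).mpr hd)
  apply hφ
  simp only [map_mul, RingHom.map_det, map_sub]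
  simp only [RingHom.mapMatrix_apply, Matrix.map_mul]
  refine det_sub_mul_mul_mul_det _ ?_ ?_ (RingHom.map_det φ M ▸ hunit _ hM)
    (RingHom.map_det φ N ▸ hunit _ hN)
  · rw [← Matrix.map_mul, hVU, Matrix.map_one _ φ.map_zero φ.map_one]
  · rw [← Matrix.map_mul, hMU, Matrix.map_mul]

variable {R : Type*} [CommRing R]

theorem charmatrix_add (A B : Matrix m m R) : charmatrix (A + B) = charmatrix A - B.map C := by
  simp only [charmatrix, map_add, sub_add_eq_sub_sub, RingHom.mapMatrix_apply]

theorem charmatrix_mul_map_C {A : Matrix m m R} {Ω : Matrix n n R} {U : Matrix m n R}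
    (hAU : A * U = U * Ω) : charmatrix A * U.map C = U.map C * charmatrix Ω := by
  simp only [charmatrix, Matrix.sub_mul, Matrix.mul_sub, RingHom.mapMatrix_apply,
    ← Matrix.map_mul, hAU]
  rw [scalar_apply, scalar_apply, ← smul_eq_diagonal_mul, ← op_smul_eq_mul_diagonal,
    op_smul_eq_smul]

theorem charpoly_add_mul_mul_mul_charpoly [IsDomain R]
    {A : Matrix m m R} {Ω : Matrix n n R} {U : Matrix m n R} {V : Matrix n m R}
    (B : Matrix n n R) (hVU : V * U = 1) (hAU : A * U = U * Ω) :
    (A + U * B * V).charpoly * Ω.charpoly = A.charpoly * (Ω + B).charpoly := by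
  have hVU' : V.map C * U.map C = 1 := by
    rw [← Matrix.map_mul, hVU, Matrix.map_one _ C.map_zero C.map_one]
  have h := det_sub_mul_mul_mul_det_of_ne_zero (B.map C) hVU' (charmatrix_mul_map_C hAU)
    A.charpoly_monic.ne_zero Ω.charpoly_monic.ne_zero
  rwa [← Matrix.map_mul, ← Matrix.map_mul, ← charmatrix_add, ← charmatrix_add] at h

end Matrix

theorem Fin.prod_univ_eq_prod_castLE_mul_prod_filter_le {M : Type*} [CommMonoid M] {r n : ℕ}
    (hr : r ≤ n) (f : Fin n → M) :
    ∏ i, f i = (∏ i : Fin r, f (Fin.castLE hr i)) *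
      ∏ i ∈ univ.filter (fun i : Fin n => r ≤ (i : ℕ)), f i := by
  have hlt : univ.filter (fun i : Fin n => (i : ℕ) < r) = univ.map (Fin.castLEEmb hr) := by
    ext i
    simp only [mem_filter, mem_univ, true_and, mem_map, Fin.coe_castLEEmb]
    exact ⟨fun h => ⟨⟨i, h⟩, rfl⟩, by rintro ⟨j, rfl⟩; exact j.isLt⟩
  simp only [← prod_filter_mul_prod_filter_not univ (fun i : Fin n => (i : ℕ) < r), hlt,
    prod_map, Fin.coe_castLEEmb, not_lt]

/-- **Symmetric Rado theorem.** If `Xm` has orthonormal columns which are eigenvectors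
of the real symmetric matrix `A` for the eigenvalues `λ_1, …, λ_r`, and `Cm` is any
real symmetric `r × r` matrix, then `A + Xm·Cm·Xmᵀ` is symmetric with eigenvalues
`μ_1, …, μ_r, λ_{r+1}, …, λ_n`, where `μ_1, …, μ_r` are the eigenvalues of `Ω + Cm`
with `Ω = diag(λ_1, …, λ_r)`. -/
theorem sym_rado (n r : ℕ) (hr : r ≤ n) (A : Matrix (Fin n) (Fin n) ℝ)
    (hsym : A.IsSymm) (l : Fin n → ℝ)
    (hA : A.charpoly = ∏ i, (X - C (l i)))
    (Xm : Matrix (Fin n) (Fin r) ℝ) (horth : Xmᵀ * Xm = 1)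
    (hAX : A * Xm = Xm * Matrix.diagonal (fun i : Fin r => l (Fin.castLE hr i)))
    (Cm : Matrix (Fin r) (Fin r) ℝ) (hCsym : Cm.IsSymm) :
    (A + Xm * Cm * Xmᵀ).IsSymm ∧
    (A + Xm * Cm * Xmᵀ).charpoly =
      (Matrix.diagonal (fun i : Fin r => l (Fin.castLE hr i)) + Cm).charpoly *
        ∏ i ∈ univ.filter (fun i : Fin n => r ≤ (i : ℕ)), (X - C (l i)) := by
  refine ⟨hsym.add (hCsym.mul_mul_transpose Xm), ?_⟩
  set Ω := Matrix.diagonal (fun i : Fin r => l (Fin.castLE hr i))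
  apply mul_left_cancel₀ Ω.charpoly_monic.ne_zero
  rw [mul_comm, charpoly_add_mul_mul_mul_charpoly Cm horth hAX, hA,
    Fin.prod_univ_eq_prod_castLE_mul_prod_filter_le hr, charpoly_diagonal]
  ring
end

section
/- (Fiedler's lemma) Let A be an m×m real symmetric matrix whose characteristic polynomial equals ∏_{i=1}^m (X − α_i), and let u ∈ ℝᵐ be a unit eigenvector of A associated with α_1 (A·u = α_1·u, ‖u‖ = 1). Let B be an n×n real symmetric matrix whose characteristic polynomial equals ∏_{j=1}^n (X − β_j), and let v ∈ ℝⁿ be a unit eigenvector of B associated with β_1 (B·v = β_1·v, ‖v‖ = 1). Then for any real scalar ρ, the (m+n)×(m+n) symmetric block matrix C = [[A, ρ·u·vᵀ],[ρ·v·uᵀ, B]] has characteristic polynomial equal to ((X − α_1)(X − β_1) − ρ²) · ∏_{i=2}^m (X − α_i) · ∏_{j=2}^n (X − β_j); that is, its eigenvalues are γ_1, γ_2, α_2, …, α_m, β_2, …, β_n, where γ_1, γ_2 are the eigenvalues of the 2×2 matrix [[α_1, ρ],[ρ, β_1]]. -/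
open Polynomial Matrix Finset

/-!
At every `t` outside the spectra of `A` and `B`, the Schur complement gives
`det (t - C) = det (t - A) * det (t - B) * (1 - ρ² ⟪u, (t - A)⁻¹ u⟫ ⟪v, (t - B)⁻¹ v⟫)`,
and for unit eigenvectors these inner products are `(t - α₁)⁻¹` and `(t - β₁)⁻¹`. Both sides
of the claimed identity therefore agree at infinitely many points, hence are equal polynomials.
-/

namespace Matrix

variable {R : Type*} [CommRing R] {m n : Type*} [Fintype m] [Fintype n]
  [DecidableEq m] [DecidableEq n]

theorem det_add_vecMulVec {M : Matrix m m R} (hM : IsUnit M.det) (u v : m → R) :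
    (M + vecMulVec u v).det = M.det * (1 + v ⬝ᵥ M⁻¹ *ᵥ u) := by
  rw [vecMulVec_eq Unit, det_add_replicateCol_mul_replicateRow hM, Matrix.mul_assoc,
    ← replicateCol_mulVec, replicateRow_mul_replicateCol, det_unique (1 + of _)]
  rfl

theorem det_fromBlocks_vecMulVec {M : Matrix m m R} {N : Matrix n n R} (hM : IsUnit M.det)
    (hN : IsUnit N.det) (u z : m → R) (v w : n → R) :
    (fromBlocks M (vecMulVec u v) (vecMulVec w z) N).det =
      M.det * N.det * (1 - (z ⬝ᵥ M⁻¹ *ᵥ u) * (v ⬝ᵥ N⁻¹ *ᵥ w)) := by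
  let := M.invertibleOfIsUnitDet hM
  have hschur : N - vecMulVec w z * ⅟M * vecMulVec u v =
      N + vecMulVec (-(z ⬝ᵥ M⁻¹ *ᵥ u) • w) v := by
    rw [invOf_eq_nonsing_inv, vecMulVec_mul, vecMulVec_mul_vecMulVec, ← dotProduct_mulVec,
      vecMulVec_smul, smul_vecMulVec, neg_smul, sub_eq_add_neg]
  rw [det_fromBlocks₁₁, hschur, det_add_vecMulVec hN, mulVec_smul, dotProduct_smul, smul_eq_mul]
  ring

theorem mul_dotProduct_inv_mulVec {M : Matrix m m R} (hM : IsUnit M.det) {u : m → R} {a : R}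
    (hu : M *ᵥ u = a • u) (z : m → R) : a * (z ⬝ᵥ M⁻¹ *ᵥ u) = z ⬝ᵥ u := by
  rw [← smul_eq_mul, ← dotProduct_smul, ← mulVec_smul, ← hu, mulVec_mulVec,
    nonsing_inv_mul M hM, one_mulVec]

theorem det_fromBlocks_smul_vecMulVec_mul {M : Matrix m m R} {N : Matrix n n R}
    (hM : IsUnit M.det) (hN : IsUnit N.det) {u : m → R} {v : n → R} {a b : R}
    (hu : M *ᵥ u = a • u) (hv : N *ᵥ v = b • v) (huu : u ⬝ᵥ u = 1) (hvv : v ⬝ᵥ v = 1)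
    (r : R) :
    (fromBlocks M (r • vecMulVec u v) (r • vecMulVec v u) N).det * (a * b) =
      M.det * N.det * (a * b - r ^ 2) := by
  have hMu := (mul_dotProduct_inv_mulVec hM hu u).trans huu
  have hNv := (mul_dotProduct_inv_mulVec hN hv v).trans hvv
  rw [← smul_vecMulVec, ← smul_vecMulVec, det_fromBlocks_vecMulVec hM hN, mulVec_smul,
    mulVec_smul, dotProduct_smul, dotProduct_smul, smul_eq_mul, smul_eq_mul]
  linear_combination -(M.det * N.det * r ^ 2) * (b * (v ⬝ᵥ N⁻¹ *ᵥ v) * hMu + hNv)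

theorem scalar_sub_fromBlocks (t : R) (A : Matrix m m R) (B : Matrix m n R) (C : Matrix n m R)
    (D : Matrix n n R) :
    scalar (m ⊕ n) t - fromBlocks A B C D =
      fromBlocks (scalar m t - A) (-B) (-C) (scalar n t - D) := by
  ext (i | i) (j | j) <;> simp [fromBlocks, scalar_apply, diagonal_apply]

theorem scalar_sub_mulVec {M : Matrix m m R} {w : m → R} {c : R} (hw : M *ᵥ w = c • w)
    (t : R) :
    (scalar m t - M) *ᵥ w = (t - c) • w := by
  rw [sub_mulVec, hw, sub_smul, scalar_apply, ← smul_one_eq_diagonal, smul_mulVec, one_mulVec]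

theorem eval_charpoly_fromBlocks_smul_vecMulVec_mul {A : Matrix m m R} {B : Matrix n n R}
    {u : m → R} {v : n → R} {a b : R}
    (hu : A *ᵥ u = a • u) (hv : B *ᵥ v = b • v) (huu : u ⬝ᵥ u = 1) (hvv : v ⬝ᵥ v = 1)
    (r t : R) (hA : IsUnit (A.charpoly.eval t)) (hB : IsUnit (B.charpoly.eval t)) :
    (fromBlocks A (r • vecMulVec u v) (r • vecMulVec v u) B).charpoly.eval t *
        ((t - a) * (t - b)) =
      A.charpoly.eval t * B.charpoly.eval t * ((t - a) * (t - b) - r ^ 2) := by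
  rw [eval_charpoly] at hA hB ⊢
  rw [eval_charpoly, eval_charpoly, scalar_sub_fromBlocks, ← neg_smul, ← neg_smul, ← neg_sq r]
  exact det_fromBlocks_smul_vecMulVec_mul hA hB (scalar_sub_mulVec hu t) (scalar_sub_mulVec hv t)
    huu hvv (-r)

end Matrix

theorem Polynomial.eval_prod_X_sub_C {R : Type*} [CommRing R] {ι : Type*} [Fintype ι]
    [DecidableEq ι] (α : ι → R) (i₀ : ι) (t : R) :
    (∏ i, (X - C (α i))).eval t = (t - α i₀) * ∏ i ∈ univ.erase i₀, (t - α i) := by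
  simp only [eval_prod, eval_sub, eval_X, eval_C]
  exact (mul_prod_erase _ (fun i => t - α i) (mem_univ i₀)).symm

theorem fiedler_lemma_general (m n : ℕ) (hm : 0 < m) (hn : 0 < n)
    (A : Matrix (Fin m) (Fin m) ℝ)
    (α : Fin m → ℝ) (hA : A.charpoly = ∏ i, (X - C (α i)))
    (u : Fin m → ℝ) (hu : A.mulVec u = α ⟨0, hm⟩ • u) (hunorm : ∑ i, u i ^ 2 = 1)
    (B : Matrix (Fin n) (Fin n) ℝ)
    (β : Fin n → ℝ) (hB : B.charpoly = ∏ j, (X - C (β j)))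
    (v : Fin n → ℝ) (hv : B.mulVec v = β ⟨0, hn⟩ • v) (hvnorm : ∑ j, v j ^ 2 = 1)
    (ρ : ℝ) :
    (Matrix.fromBlocks A (ρ • vecMulVec u v) (ρ • vecMulVec v u) B).charpoly =
      ((X - C (α ⟨0, hm⟩)) * (X - C (β ⟨0, hn⟩)) - C (ρ ^ 2)) *
        ((∏ i ∈ Finset.univ.erase ⟨0, hm⟩, (X - C (α i))) *
          (∏ j ∈ Finset.univ.erase ⟨0, hn⟩, (X - C (β j)))) := by
  apply eq_of_infinite_eval_eq
  refine ((Set.finite_range α).union (Set.finite_range β)).infinite_compl.mono fun t ht => ?_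
  simp only [Set.mem_compl_iff, Set.mem_union, Set.mem_range, not_or, not_exists] at ht
  have hαt : ∀ i, t - α i ≠ 0 := fun i => sub_ne_zero.2 (Ne.symm (ht.1 i))
  have hβt : ∀ j, t - β j ≠ 0 := fun j => sub_ne_zero.2 (Ne.symm (ht.2 j))
  have hAt := hA ▸ eval_prod_X_sub_C α ⟨0, hm⟩ t
  have hBt := hB ▸ eval_prod_X_sub_C β ⟨0, hn⟩ t
  have hdet := eval_charpoly_fromBlocks_smul_vecMulVec_mul hu hv
    (by simpa [dotProduct, sq] using hunorm) (by simpa [dotProduct, sq] using hvnorm) ρ t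
    (by simp [hAt, prod_ne_zero_iff, hαt]) (by simp [hBt, prod_ne_zero_iff, hβt])
  rw [hAt, hBt] at hdet
  refine mul_right_cancel₀ (mul_ne_zero (hαt _) (hβt _)) (hdet.trans ?_)
  simp only [eval_mul, eval_sub, eval_X, eval_C, eval_prod]
  ring

/-- **Fiedler's lemma.** Let `A` be `m × m` real symmetric with eigenvalues
`α_1, …, α_m` and unit eigenvector `u` for `α_1`; let `B` be `n × n` real symmetric
with eigenvalues `β_1, …, β_n` and unit eigenvector `v` for `β_1`. Then for any real
`ρ`, the block matrix `[[A, ρ u vᵀ], [ρ v uᵀ, B]]` has characteristic polynomial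
`((X - α_1)(X - β_1) - ρ²) ∏_{i≥2} (X - α_i) ∏_{j≥2} (X - β_j)`. -/
theorem fiedler_lemma (m n : ℕ) (hm : 0 < m) (hn : 0 < n)
    (A : Matrix (Fin m) (Fin m) ℝ) (hAsym : A.IsSymm)
    (α : Fin m → ℝ) (hA : A.charpoly = ∏ i, (X - C (α i)))
    (u : Fin m → ℝ) (hu : A.mulVec u = α ⟨0, hm⟩ • u) (hunorm : ∑ i, u i ^ 2 = 1)
    (B : Matrix (Fin n) (Fin n) ℝ) (hBsym : B.IsSymm)
    (β : Fin n → ℝ) (hB : B.charpoly = ∏ j, (X - C (β j)))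
    (v : Fin n → ℝ) (hv : B.mulVec v = β ⟨0, hn⟩ • v) (hvnorm : ∑ j, v j ^ 2 = 1)
    (ρ : ℝ) :
    (Matrix.fromBlocks A (ρ • vecMulVec u v) (ρ • vecMulVec v u) B).charpoly =
      ((X - C (α ⟨0, hm⟩)) * (X - C (β ⟨0, hn⟩)) - C (ρ ^ 2)) *
        ((∏ i ∈ Finset.univ.erase ⟨0, hm⟩, (X - C (α i))) *
          (∏ j ∈ Finset.univ.erase ⟨0, hn⟩, (X - C (β j)))) :=
  fiedler_lemma_general m n hm hn A α hA u hu hunorm B β hB v hv hvnorm ρ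
end
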